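/- arXiv:1410.1017 — 3 statements merged into one kernel-verified Lean document; each statement's English description precedes it below -/
import Mathlib

section
/- If x is a computable real number that is not algebraic and its irrationality exponent is finite, then its irrationality exponent is right-computably enumerable in 0', i.e., the set of rational b for which only finitely many rationals p/q satisfy |x − p/q| < 1/q^b is computably enumerable with oracle 0'. -/
/-- A real number is computable if there is a computable sequence of rationals `(r_j)` with
`|x - r_j| < 2^{-j}` for all `j`. -/
def IsComputableReal (x : ℝ) : Prop :=
  ∃ r : ℕ → ℚ, Computable r ∧ ∀ j : ℕ, |x - (r j : ℝ)| < (2 : ℝ)⁻¹ ^ j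

/-- A predicate on rationals is computably enumerable in the halting oracle `0'` if and only
if it is `Σ⁰₂`, i.e. of the form `∃ k ∀ m, R b k m` with computable matrix `R`.  We take
this characterization as the definition. -/
def RePredInZeroJump (S : ℚ → Prop) : Prop :=
  ∃ R : ℚ → ℕ → ℕ → Bool,
    Computable (fun p : ℚ × ℕ × ℕ => R p.1 p.2.1 p.2.2) ∧
    ∀ b, S b ↔ ∃ k, ∀ m, R b k m = true

/-!
Let `r j` be rationals with `|x - r j| < 2⁻¹ ^ j`. Then `q ^ (-b) ≤ |x - p / q|` holds iff
`q ^ (-b) ≤ |r j - p / q| + 2⁻¹ ^ j` for every `j`, and for rational `b` the latter is a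
decidable inequality between natural numbers once `b` and `r j` are written as fractions. The set
of good approximations `p / q` at exponent `b` is finite iff their denominators are bounded by
some `k` (the numerators are then bounded as well), so finiteness has the `Σ⁰₂` form
`∃ k, ∀ (p, q, j), q ≤ k ∨ (decidable inequality)`.
-/

open Encodable Denumerable Filter Topology

theorem Int.encode_natCast (n : ℕ) : encode (n : ℤ) = 2 * n := rfl

theorem Int.encode_negSucc (n : ℕ) : encode (Int.negSucc n) = 2 * n + 1 := rfl

theorem Nat.gcd_eq_findGreatest (a b : ℕ) :
    Nat.gcd a b = Nat.findGreatest (fun k => k ∣ a ∧ k ∣ b) (a + b) := by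
  rcases Nat.eq_zero_or_pos (a + b) with hab | hab
  · obtain ⟨rfl, rfl⟩ : a = 0 ∧ b = 0 := by omega
    simp
  have hgcd : 0 < Nat.gcd a b := Nat.pos_of_ne_zero fun h => by
    rw [Nat.gcd_eq_zero_iff] at h
    omega
  refine (Nat.findGreatest_eq_iff.2 ⟨Nat.le_of_dvd hab (dvd_add (gcd_dvd_left a b)
    (gcd_dvd_right a b)), fun _ => ⟨Nat.gcd_dvd_left a b, Nat.gcd_dvd_right a b⟩,
    fun k hk _ hdvd => hk.not_ge (Nat.le_of_dvd hgcd (Nat.dvd_gcd hdvd.1 hdvd.2))⟩).symm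

namespace Primrec

theorem nat_pow : Primrec₂ ((· ^ ·) : ℕ → ℕ → ℕ) :=
  Primrec₂.unpaired'.1 Nat.Primrec.pow

theorem nat_dvd : PrimrecRel ((· ∣ ·) : ℕ → ℕ → Prop) :=
  (Primrec.eq.comp (nat_mod.comp snd fst) (const 0)).of_eq fun _ => Nat.dvd_iff_mod_eq_zero.symm

theorem nat_gcd : Primrec₂ Nat.gcd :=
  (nat_findGreatest (p := fun (ab : ℕ × ℕ) k => k ∣ ab.1 ∧ k ∣ ab.2) nat_add
    ((nat_dvd.comp snd (fst.comp fst)).and (nat_dvd.comp snd (snd.comp fst)))).of_eq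
    fun ab => (Nat.gcd_eq_findGreatest ab.1 ab.2).symm

theorem nat_count {p : ℕ → Prop} [DecidablePred p] (hp : PrimrecPred p) :
    Primrec (Nat.count p) := by
  refine (nat_rec₁ 0 (nat_add.comp snd (ite (hp.comp fst) (const 1) (const 0))).to₂).of_eq
    fun n => ?_
  induction n with
  | zero => rfl
  | succ n ih => simp [Nat.count_succ, ih]

-- Integer arithmetic reduces to arithmetic on the two parts of `z = z.toNat - (-z).toNat`.
theorem int_toNat_neg_toNat : Primrec fun z : ℤ => (z.toNat, (-z).toNat) := by
  refine (cond (nat_bodd.comp Primrec.encode)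
    (pair (const 0) (succ.comp (nat_div2.comp Primrec.encode)))
    (pair (nat_div2.comp Primrec.encode) (const 0))).of_eq fun z => ?_
  cases z with
  | ofNat n => simp [Int.encode_natCast, Nat.div2_val]
  | negSucc n =>
    rw [Int.encode_negSucc]
    simp [Nat.div2_val]

theorem int_natCast_sub : Primrec₂ fun a b : ℕ => (a - b : ℤ) := by
  refine encode_iff.1 <| (ite nat_le.swap (nat_double.comp nat_sub)
    (nat_double_succ.comp (nat_sub.comp (nat_sub.comp snd fst) (const 1)))).of_eq fun ⟨a, b⟩ => ?_
  dsimp only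
  split_ifs with h
  · rw [show (a - b : ℤ) = ((a - b : ℕ) : ℤ) by omega, Int.encode_natCast]
  · rw [show (a - b : ℤ) = Int.negSucc (b - a - 1) by omega, Int.encode_negSucc]

theorem int_toNat : Primrec Int.toNat := fst.comp int_toNat_neg_toNat

theorem int_neg_toNat : Primrec fun z : ℤ => (-z).toNat := snd.comp int_toNat_neg_toNat

theorem int_natCast : Primrec (Nat.cast : ℕ → ℤ) :=
  (int_natCast_sub.comp .id (const 0)).of_eq fun n => by simp

theorem int_natAbs : Primrec Int.natAbs :=
  (nat_add.comp int_toNat int_neg_toNat).of_eq Int.toNat_add_toNat_neg_eq_natAbs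

theorem int_sub : Primrec₂ ((· - ·) : ℤ → ℤ → ℤ) := by
  refine (int_natCast_sub.comp (nat_add.comp (int_toNat.comp fst) (int_neg_toNat.comp snd))
    (nat_add.comp (int_neg_toNat.comp fst) (int_toNat.comp snd))).of_eq fun ⟨z, w⟩ => ?_
  dsimp only
  omega

theorem int_mul : Primrec₂ ((· * ·) : ℤ → ℤ → ℤ) := by
  refine (int_natCast_sub.comp
    (nat_add.comp (nat_mul.comp (int_toNat.comp fst) (int_toNat.comp snd))
      (nat_mul.comp (int_neg_toNat.comp fst) (int_neg_toNat.comp snd)))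
    (nat_add.comp (nat_mul.comp (int_toNat.comp fst) (int_neg_toNat.comp snd))
      (nat_mul.comp (int_neg_toNat.comp fst) (int_toNat.comp snd)))).of_eq fun ⟨z, w⟩ => ?_
  dsimp only
  push_cast
  linear_combination ((w.toNat : ℤ) - (-w).toNat) * Int.toNat_sub_toNat_neg z
    + z * Int.toNat_sub_toNat_neg w

end Primrec

theorem Computable.nat_nth {p : ℕ → Prop} (hp : PrimrecPred p)
    (hinf : (Set.ofPred p).Infinite) : Computable (Nat.nth p) := by
  classical
  have hsearch : Partrec₂ fun n y => Part.some (decide (p y ∧ Nat.count p y = n)) :=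
    (PrimrecPred.and (hp.comp .snd) (Primrec.eq.comp ((Primrec.nat_count hp).comp .snd) .fst)
      ).decide.to_comp.partrec
  refine (Partrec.rfind hsearch).of_eq_tot fun n => Nat.mem_rfind.2 ⟨?_, fun {m} hm => ?_⟩
  · simpa using ⟨Nat.nth_mem_of_infinite hinf n, Nat.count_nth_of_infinite hinf n⟩
  · simp only [Part.mem_some_iff, Bool.false_eq, decide_eq_false_iff_not, not_and]
    intro hpm hcount
    have hnth := Nat.nth_count hpm
    rw [hcount] at hnth
    omega

/- `ℚ` carries two encodings: `Rat.instEncodable` codes `b` as the pair `(b.num, b.den)`, while the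
`Primcodable` encoding, which computability refers to, comes from `Denumerable ℚ` and sends `b` to
the rank of that pair code among all pair codes. -/
namespace Rat

theorem ofNat_encode_eq_num_den (b : ℚ) :
    ofNat (ℤ × ℕ) (@encode ℚ instEncodable b) = (b.num, b.den) :=
  Denumerable.ofNat_encode (b.num, b.den)

theorem nth_mem_range_encode (b : ℚ) :
    Nat.nth (· ∈ Set.range (@encode ℚ instEncodable)) (@encode ℚ Primcodable.toEncodable b) =
      @encode ℚ instEncodable b :=
  @Nat.nth_count _ (@decidableRangeEncode ℚ instEncodable) _ (Set.mem_range_self b)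

theorem mem_range_encode_iff (y : ℕ) :
    y ∈ Set.range (@encode ℚ instEncodable) ↔
      0 < (ofNat (ℤ × ℕ) y).2 ∧ (ofNat (ℤ × ℕ) y).1.natAbs.Coprime (ofNat (ℤ × ℕ) y).2 := by
  constructor
  · rintro ⟨b, rfl⟩
    rw [ofNat_encode_eq_num_den]
    exact ⟨b.pos, b.reduced⟩
  · rintro ⟨hpos, hcop⟩
    exact ⟨⟨(ofNat (ℤ × ℕ) y).1, (ofNat (ℤ × ℕ) y).2, hpos.ne', hcop⟩,
      Denumerable.encode_ofNat (α := ℤ × ℕ) y⟩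

theorem primrecPred_mem_range_encode :
    PrimrecPred (· ∈ Set.range (@encode ℚ instEncodable)) := by
  have hdec := Primrec.ofNat (ℤ × ℕ)
  refine (PrimrecPred.and (Primrec.nat_lt.comp (.const 0) (Primrec.snd.comp hdec))
    (Primrec.eq.comp (Primrec.nat_gcd.comp (Primrec.int_natAbs.comp (Primrec.fst.comp hdec))
      (Primrec.snd.comp hdec)) (.const 1))).of_eq fun y => ?_
  rw [mem_range_encode_iff, Nat.coprime_iff_gcd_eq_one]

end Rat

theorem Computable.rat_num_den : Computable fun b : ℚ => (b.num, b.den) := by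
  have hinf : (Set.range (@encode ℚ Rat.instEncodable)).Infinite :=
    Set.infinite_range_of_injective (@encode_injective ℚ Rat.instEncodable)
  refine ((Primrec.ofNat (ℤ × ℕ)).to_comp.comp
    ((Computable.nat_nth Rat.primrecPred_mem_range_encode hinf).comp Computable.encode)).of_eq
    fun b => ?_
  simp only [Rat.nth_mem_range_encode, Rat.ofNat_encode_eq_num_den]

theorem finite_setOf_abs_sub_div_lt (x ε : ℝ) {q : ℝ} (hq : 0 < q) :
    {p : ℤ | |x - p / q| < ε}.Finite := by
  refine (Set.finite_Icc ⌊(x - ε) * q⌋ ⌈(x + ε) * q⌉).subset fun p (hp : |x - p / q| < ε) => ?_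
  obtain ⟨hlo, hhi⟩ := abs_lt.1 hp
  have hlo' : (x - ε) * q < p := by rw [← lt_div_iff₀ hq]; linarith
  have hhi' : (p : ℝ) < (x + ε) * q := by rw [← div_lt_iff₀ hq]; linarith
  exact ⟨Int.floor_le_iff.2 (by linarith), Int.le_ceil_iff.2 (by linarith)⟩

theorem finite_setOf_abs_sub_div_lt_iff (x b : ℝ) :
    {pq : ℤ × ℤ | 0 < pq.2 ∧ |x - pq.1 / pq.2| < 1 / (pq.2 : ℝ) ^ b}.Finite ↔
      ∃ k : ℕ, ∀ (p : ℤ) (q : ℕ), k < q → 1 / (q : ℝ) ^ b ≤ |x - p / q| := by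
  constructor
  · intro hfin
    obtain ⟨k, hk⟩ := (hfin.image fun pq => pq.2.toNat).bddAbove
    refine ⟨k, fun p q hkq => not_lt.1 fun hlt => ?_⟩
    have hqk := hk ⟨(p, q), ⟨by simpa using Nat.zero_lt_of_lt hkq, by simpa using hlt⟩, rfl⟩
    simp only [Int.toNat_natCast] at hqk
    omega
  · rintro ⟨k, hk⟩
    refine ((Set.finite_Icc (1 : ℤ) k).biUnion fun q hq =>
      (finite_setOf_abs_sub_div_lt x (1 / (q : ℝ) ^ b) (q := q) (by
        exact_mod_cast hq.1)).image fun p => (p, q)).subset ?_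
    rintro ⟨p, q⟩ ⟨hq, hlt⟩
    lift q to ℕ using hq.le
    have hqk : q ≤ k := not_lt.1 fun hkq => (hk p q hkq).not_gt (by simpa using hlt)
    exact Set.mem_biUnion (x := (q : ℤ)) (Set.mem_Icc.2 ⟨by omega, by omega⟩) ⟨p, hlt, rfl⟩

theorem le_abs_sub_iff_forall_of_tendsto {x u v : ℝ} {r ε : ℕ → ℝ}
    (hr : ∀ j, |x - r j| ≤ ε j) (hε : Tendsto ε atTop (𝓝 0)) :
    v ≤ |x - u| ↔ ∀ j, v ≤ |r j - u| + ε j := by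
  constructor
  · intro h j
    linarith [abs_sub_le x (r j) u, hr j]
  · intro h
    have hgap : ∀ j, v - |x - u| ≤ 2 * ε j := fun j => by
      linarith [h j, abs_sub_le (r j) x u, abs_sub_comm x (r j), hr j]
    have := ge_of_tendsto' (by simpa using hε.const_mul 2) hgap
    linarith

theorem one_div_rpow_le_div_iff {q N D : ℝ} (hq : 0 < q) (hN : 0 ≤ N) (hD : 0 < D) (b : ℚ) :
    1 / q ^ (b : ℝ) ≤ N / D ↔
      D ^ b.den * q ^ (-b.num).toNat ≤ N ^ b.den * q ^ b.num.toNat := by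
  have hpow : (N * q ^ (b : ℝ)) ^ b.den = N ^ b.den * (q ^ b.num.toNat / q ^ (-b.num).toNat) := by
    rw [mul_pow, ← Real.rpow_natCast (q ^ (b : ℝ)), ← Real.rpow_mul hq.le,
      show (b : ℝ) * b.den = b.num by exact_mod_cast Rat.mul_den_eq_num b, Real.rpow_intCast,
      ← zpow_natCast q, ← zpow_natCast q, ← zpow_sub₀ hq.ne', Int.toNat_sub_toNat_neg]
  calc 1 / q ^ (b : ℝ) ≤ N / D ↔ D ≤ N * q ^ (b : ℝ) := by
        rw [div_le_div_iff₀ (by positivity) hD, one_mul]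
    _ ↔ D ^ b.den ≤ (N * q ^ (b : ℝ)) ^ b.den :=
        (pow_le_pow_iff_left₀ hD.le (by positivity) b.den_nz).symm
    _ ↔ D ^ b.den * q ^ (-b.num).toNat ≤ N ^ b.den * q ^ b.num.toNat := by
        rw [hpow, mul_div_assoc', le_div_iff₀ (by positivity)]

theorem abs_sub_div_add_inv_pow_eq (z : ℚ) (p : ℤ) {q : ℕ} (hq : 0 < q) (j : ℕ) :
    |(z : ℝ) - p / q| + 2⁻¹ ^ j =
      (((z.num * q - p * z.den).natAbs * 2 ^ j + z.den * q : ℕ) : ℝ) / (z.den * q * 2 ^ j : ℕ) := by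
  have hd : (0 : ℝ) < z.den := by exact_mod_cast z.pos
  have hq' : (0 : ℝ) < q := by exact_mod_cast hq
  rw [Rat.cast_def, div_sub_div _ _ hd.ne' hq'.ne', abs_div,
    abs_of_pos (show (0 : ℝ) < z.den * q by positivity)]
  push_cast [Nat.cast_natAbs, Int.cast_abs, inv_pow]
  field_simp

/-- `ApproxTest (b.num, b.den) (z.num, z.den) p q j` is `q ^ (-b) ≤ |z - p / q| + 2⁻¹ ^ j`
cleared of denominators. -/
def ApproxTest (b z : ℤ × ℕ) (p : ℤ) (q j : ℕ) : Prop :=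
  (z.2 * q * 2 ^ j) ^ b.2 * q ^ (-b.1).toNat ≤
    ((z.1 * q - p * z.2).natAbs * 2 ^ j + z.2 * q) ^ b.2 * q ^ b.1.toNat

instance (b z : ℤ × ℕ) (p : ℤ) (q j : ℕ) : Decidable (ApproxTest b z p q j) :=
  inferInstanceAs (Decidable (_ ≤ _))

theorem approxTest_iff (b z : ℚ) (p : ℤ) {q : ℕ} (hq : 0 < q) (j : ℕ) :
    ApproxTest (b.num, b.den) (z.num, z.den) p q j ↔
      1 / (q : ℝ) ^ (b : ℝ) ≤ |(z : ℝ) - p / q| + 2⁻¹ ^ j := by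
  rw [abs_sub_div_add_inv_pow_eq z p hq, one_div_rpow_le_div_iff (by positivity) (by positivity)
    (by positivity), ApproxTest]
  exact_mod_cast Iff.rfl

open Primrec in
theorem primrecPred_approxTest :
    PrimrecPred fun a : (ℤ × ℕ) × (ℤ × ℕ) × ℤ × ℕ × ℕ =>
      ApproxTest a.1 a.2.1 a.2.2.1 a.2.2.2.1 a.2.2.2.2 := by
  have hb := fst (α := ℤ × ℕ) (β := (ℤ × ℕ) × ℤ × ℕ × ℕ)
  have hz := fst.comp (snd (α := ℤ × ℕ) (β := (ℤ × ℕ) × ℤ × ℕ × ℕ))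
  have hp := fst.comp (snd.comp (snd (α := ℤ × ℕ) (β := (ℤ × ℕ) × ℤ × ℕ × ℕ)))
  have hq := fst.comp (snd.comp (snd.comp (snd (α := ℤ × ℕ) (β := (ℤ × ℕ) × ℤ × ℕ × ℕ))))
  have hj := snd.comp (snd.comp (snd.comp (snd (α := ℤ × ℕ) (β := (ℤ × ℕ) × ℤ × ℕ × ℕ))))
  have h2j := nat_pow.comp (const 2) hj
  have hnum := nat_add.comp (nat_mul.comp (int_natAbs.comp (int_sub.comp
      (int_mul.comp (fst.comp hz) (int_natCast.comp hq))
      (int_mul.comp hp (int_natCast.comp (snd.comp hz))))) h2j) (nat_mul.comp (snd.comp hz) hq)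
  have hden := nat_mul.comp (nat_mul.comp (snd.comp hz) hq) h2j
  exact nat_le.comp
    (nat_mul.comp (nat_pow.comp hden (snd.comp hb))
      (nat_pow.comp hq (int_neg_toNat.comp (fst.comp hb))))
    (nat_mul.comp (nat_pow.comp hnum (snd.comp hb))
      (nat_pow.comp hq (int_toNat.comp (fst.comp hb))))

def approxMatrix (r : ℕ → ℚ) (b : ℚ) (k m : ℕ) : Bool :=
  let w := ofNat (ℤ × ℕ × ℕ) m
  decide (w.2.1 ≤ k ∨ ApproxTest (b.num, b.den) ((r w.2.2).num, (r w.2.2).den) w.1 w.2.1 w.2.2)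

open Computable in
theorem computable_approxMatrix {r : ℕ → ℚ} (hr : Computable r) :
    Computable fun a : ℚ × ℕ × ℕ => approxMatrix r a.1 a.2.1 a.2.2 := by
  have hw := (Primrec.ofNat (ℤ × ℕ × ℕ)).to_comp.comp (snd.comp (snd (α := ℚ) (β := ℕ × ℕ)))
  have htest := primrecPred_approxTest.decide.to_comp.comp (pair (rat_num_den.comp fst)
    (pair (rat_num_den.comp (hr.comp (snd.comp (snd.comp hw)))) hw))
  refine (Primrec.or.to_comp.comp
    (Primrec.nat_le.decide.to_comp.comp (fst.comp (snd.comp hw))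
      (fst.comp (snd (α := ℚ) (β := ℕ × ℕ)))) htest).of_eq
    fun a => ?_
  simp [approxMatrix]

theorem forall_approxMatrix_iff (r : ℕ → ℚ) (b : ℚ) (k : ℕ) :
    (∀ m, approxMatrix r b k m = true) ↔
      ∀ (p : ℤ) (q : ℕ), k < q → ∀ j, 1 / (q : ℝ) ^ (b : ℝ) ≤ |(r j : ℝ) - p / q| + 2⁻¹ ^ j := by
  have hdecode : (∀ m, approxMatrix r b k m = true) ↔ ∀ w : ℤ × ℕ × ℕ,
      w.2.1 ≤ k ∨ ApproxTest (b.num, b.den) ((r w.2.2).num, (r w.2.2).den) w.1 w.2.1 w.2.2 := by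
    simp only [approxMatrix, decide_eq_true_iff]
    exact ⟨fun h w => by simpa only [ofNat_encode] using h (encode w), fun h m => h _⟩
  rw [hdecode]
  constructor
  · intro h p q hkq j
    exact (approxTest_iff b (r j) p (Nat.zero_lt_of_lt hkq) j).1
      ((h (p, q, j)).resolve_left hkq.not_ge)
  · rintro h ⟨p, q, j⟩
    rcases le_or_gt q k with hqk | hkq
    · exact .inl hqk
    · exact .inr ((approxTest_iff b (r j) p (Nat.zero_lt_of_lt hkq) j).2 (h p q hkq j))

theorem rightCEInZeroJump_of_computable_transcendental_general
    (x : ℝ) (hx : IsComputableReal x) :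
    RePredInZeroJump (fun b : ℚ =>
      {pq : ℤ × ℤ | 0 < pq.2 ∧
        |x - (pq.1 : ℝ) / (pq.2 : ℝ)| < 1 / (pq.2 : ℝ) ^ (b : ℝ)}.Finite) := by
  obtain ⟨r, hr, hrx⟩ := hx
  refine ⟨approxMatrix r, computable_approxMatrix hr, fun b => ?_⟩
  dsimp only
  rw [finite_setOf_abs_sub_div_lt_iff]
  refine exists_congr fun k => ?_
  rw [forall_approxMatrix_iff]
  refine forall₂_congr fun p q => imp_congr_right fun _ => ?_
  exact le_abs_sub_iff_forall_of_tendsto (fun j => (hrx j).le)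
    (tendsto_pow_atTop_nhds_zero_of_lt_one (by norm_num) (by norm_num))

/-- If `x` is a computable real number that is not algebraic and its irrationality exponent
is finite, then its irrationality exponent is right-computably enumerable in `0'`: the set of
rational `b` for which only finitely many rationals `p/q` satisfy `|x − p/q| < 1/q^b` is
computably enumerable with oracle `0'`. -/
theorem rightCEInZeroJump_of_computable_transcendental
    (x : ℝ) (hx : IsComputableReal x) (halg : ¬ IsAlgebraic ℤ x)
    (hfin : BddAbove {z : ℝ | {pq : ℤ × ℤ | 0 < pq.2 ∧ 0 < |x - (pq.1 : ℝ) / (pq.2 : ℝ)| ∧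
      |x - (pq.1 : ℝ) / (pq.2 : ℝ)| < 1 / (pq.2 : ℝ) ^ z}.Infinite}) :
    RePredInZeroJump (fun b : ℚ =>
      {pq : ℤ × ℤ | 0 < pq.2 ∧
        |x - (pq.1 : ℝ) / (pq.2 : ℝ)| < 1 / (pq.2 : ℝ) ^ (b : ℝ)}.Finite) :=
  rightCEInZeroJump_of_computable_transcendental_general x hx
end

section
/- For a real b > 2 and primes p₁ < p₂ with M < p₁ < p₂ < 2M (M a sufficiently large positive integer depending only on a lower bound β > 2 for b), the sets G_{p₁}(b) and G_{p₂}(b) are disjoint, and the distance between any point of G_{p₁}(b) and any point of G_{p₂}(b) is at least 1/(4M²) − 2/M^b ≥ 1/(8M²). -/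
/-- `G_q(b) = { x ∈ (1/q^b, 1 − 1/q^b) : ∃ p ∈ ℤ, |p/q − x| < 1/q^b }`. -/
def G (q : ℕ) (b : ℝ) : Set ℝ :=
  {x : ℝ | x ∈ Set.Ioo (1 / (q : ℝ) ^ b) (1 - 1 / (q : ℝ) ^ b) ∧
    ∃ p : ℤ, |(p : ℝ) / (q : ℝ) - x| < 1 / (q : ℝ) ^ b}

/-!
Every point of `G_q(b)` lies within `1/q^b` of a fraction `a/q` with `0 < a < q`. For coprime
`q₁, q₂` two such fractions `a/q₁` and `c/q₂` are distinct, so they differ by at least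
`1/(q₁q₂)`, which exceeds `1/(4M²)` when `M < q₁, q₂ < 2M`. Since `b > 2`, the error terms
`1/q^b ≤ 1/M^b` are negligible against this gap once `M` is large.
-/

open Filter

lemma exists_num_near_of_mem_G {q : ℕ} {b x : ℝ} (hx : x ∈ G q b) :
    ∃ a : ℤ, 0 < a ∧ a < q ∧ |(a : ℝ) / q - x| < 1 / (q : ℝ) ^ b := by
  obtain ⟨⟨hx_low, hx_high⟩, a, ha⟩ := hx
  have hfrac_pos : 0 < (a : ℝ) / q := by linarith [(abs_lt.mp ha).1]
  have hfrac_lt_one : (a : ℝ) / q < 1 := by linarith [(abs_lt.mp ha).2]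
  have hq : (0 : ℝ) < q := (div_pos_iff.mp hfrac_pos).resolve_right (by simp) |>.2
  refine ⟨a, ?_, ?_, ha⟩
  · exact_mod_cast (div_pos_iff_of_pos_right hq).mp hfrac_pos
  · exact_mod_cast (div_lt_one hq).mp hfrac_lt_one

lemma one_div_mul_le_abs_div_sub_div {q₁ q₂ : ℕ} (hcop : q₁.Coprime q₂) (hq₁ : 0 < q₁)
    (hq₂ : 0 < q₂) {a c : ℤ} (ha : ¬ (q₁ : ℤ) ∣ a) :
    1 / ((q₁ : ℝ) * q₂) ≤ |(a : ℝ) / q₁ - (c : ℝ) / q₂| := by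
  have hcross : a * q₂ - c * q₁ ≠ 0 := by
    intro h
    have hdvd : (q₁ : ℤ) ∣ a * q₂ := ⟨c, by linarith⟩
    exact ha ((Nat.isCoprime_iff_coprime.mpr hcop).dvd_of_dvd_mul_right hdvd)
  have hone : (1 : ℝ) ≤ |((a * q₂ - c * q₁ : ℤ) : ℝ)| := by
    exact_mod_cast Int.one_le_abs hcross
  have hdiff : (a : ℝ) / q₁ - (c : ℝ) / q₂ = ((a * q₂ - c * q₁ : ℤ) : ℝ) / (q₁ * q₂) := by
    push_cast
    field_simp
  rw [hdiff, abs_div, abs_of_pos (by positivity : (0 : ℝ) < q₁ * q₂)]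
  gcongr

lemma sub_le_abs_sub_of_mem_G {q₁ q₂ : ℕ} (hcop : q₁.Coprime q₂) {b x y : ℝ}
    (hx : x ∈ G q₁ b) (hy : y ∈ G q₂ b) :
    1 / ((q₁ : ℝ) * q₂) - 1 / (q₁ : ℝ) ^ b - 1 / (q₂ : ℝ) ^ b ≤ |x - y| := by
  obtain ⟨a, ha_pos, ha_lt, hxa⟩ := exists_num_near_of_mem_G hx
  obtain ⟨c, hc_pos, hc_lt, hyc⟩ := exists_num_near_of_mem_G hy
  have ha : ¬ (q₁ : ℤ) ∣ a := fun h => (Int.le_of_dvd ha_pos h).not_gt ha_lt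
  have hgap := one_div_mul_le_abs_div_sub_div hcop (by omega) (by omega) (c := c) ha
  have htri := abs_sub_le ((a : ℝ) / q₁) x ((c : ℝ) / q₂)
  have htri' := abs_sub_le x y ((c : ℝ) / q₂)
  rw [abs_sub_comm] at hyc
  linarith

lemma eventually_two_div_rpow_le {β : ℝ} (hβ : 2 < β) :
    ∀ᶠ M : ℕ in atTop, ∀ b : ℝ, β ≤ b → 2 / (M : ℝ) ^ b ≤ 1 / (8 * (M : ℝ) ^ 2) := by
  have hgrowth : Tendsto (fun M : ℕ => (M : ℝ) ^ (β - 2)) atTop atTop :=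
    (tendsto_rpow_atTop (by linarith)).comp tendsto_natCast_atTop_atTop
  filter_upwards [hgrowth.eventually_ge_atTop 16, eventually_ge_atTop 1] with M h16 hM b hb
  have hM1 : (1 : ℝ) ≤ M := by exact_mod_cast hM
  have hsplit : (M : ℝ) ^ b = (M : ℝ) ^ 2 * (M : ℝ) ^ (b - 2) := by
    rw [← Real.rpow_natCast, ← Real.rpow_add (by linarith)]
    norm_num
  have h16b : 16 ≤ (M : ℝ) ^ (b - 2) :=
    h16.trans (Real.rpow_le_rpow_of_exponent_le hM1 (by linarith))
  rw [div_le_div_iff₀ (by positivity) (by positivity), hsplit]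
  nlinarith [pow_pos (by linarith : (0 : ℝ) < M) 2]

/-- For a real `b > 2` (with lower bound `β > 2`) and primes `M < p₁ < p₂ < 2M`, with `M`
sufficiently large depending only on `β`, the sets `G_{p₁}(b)` and `G_{p₂}(b)` are disjoint,
and the distance between any point of `G_{p₁}(b)` and any point of `G_{p₂}(b)` is at least
`1/(4M²) − 2/M^b ≥ 1/(8M²)`. -/
theorem G_disjoint_and_separated (β : ℝ) (hβ : 2 < β) :
    ∃ M₀ : ℕ, ∀ M : ℕ, M₀ ≤ M → ∀ b : ℝ, β ≤ b →
      ∀ p₁ p₂ : ℕ, p₁.Prime → p₂.Prime → M < p₁ → p₁ < p₂ → p₂ < 2 * M →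
        Disjoint (G p₁ b) (G p₂ b) ∧
        1 / (8 * (M : ℝ) ^ 2) ≤ 1 / (4 * (M : ℝ) ^ 2) - 2 / (M : ℝ) ^ b ∧
        ∀ x ∈ G p₁ b, ∀ y ∈ G p₂ b,
          1 / (4 * (M : ℝ) ^ 2) - 2 / (M : ℝ) ^ b ≤ |x - y| := by
  obtain ⟨M₀, hM₀⟩ := eventually_atTop.mp (eventually_two_div_rpow_le hβ)
  refine ⟨M₀, fun M hM b hb p₁ p₂ hp₁ hp₂ hMp₁ hp₁p₂ hp₂M => ?_⟩
  have hMpos : (0 : ℝ) < M := by exact_mod_cast (by omega : 0 < M)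
  have hb0 : 0 ≤ b := by linarith
  have hsmall := hM₀ M hM b hb
  have hlower : 1 / (8 * (M : ℝ) ^ 2) ≤ 1 / (4 * (M : ℝ) ^ 2) - 2 / (M : ℝ) ^ b := by
    linarith [show 1 / (4 * (M : ℝ) ^ 2) = 2 * (1 / (8 * (M : ℝ) ^ 2)) by ring]
  have hsep : ∀ x ∈ G p₁ b, ∀ y ∈ G p₂ b,
      1 / (4 * (M : ℝ) ^ 2) - 2 / (M : ℝ) ^ b ≤ |x - y| := by
    intro x hx y hy
    have hgap := sub_le_abs_sub_of_mem_G ((Nat.coprime_primes hp₁ hp₂).mpr hp₁p₂.ne) hx hy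
    have hprod : 1 / (4 * (M : ℝ) ^ 2) ≤ 1 / ((p₁ : ℝ) * p₂) := by
      refine one_div_le_one_div_of_le
        (mul_pos (by exact_mod_cast hp₁.pos) (by exact_mod_cast hp₂.pos)) ?_
      calc (p₁ : ℝ) * p₂ ≤ (2 * M) * (2 * M) := by gcongr <;> norm_cast <;> omega
        _ = 4 * (M : ℝ) ^ 2 := by ring
    have herr₁ : 1 / (p₁ : ℝ) ^ b ≤ 1 / (M : ℝ) ^ b := by gcongr
    have herr₂ : 1 / (p₂ : ℝ) ^ b ≤ 1 / (M : ℝ) ^ b := by gcongr; omega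
    linarith [show 2 / (M : ℝ) ^ b = 1 / (M : ℝ) ^ b + 1 / (M : ℝ) ^ b by ring]
  refine ⟨Set.disjoint_left.mpr fun x hx₁ hx₂ => ?_, hlower, hsep⟩
  have := hsep x hx₁ x hx₂
  rw [sub_self, abs_zero] at this
  have : 0 < 1 / (8 * (M : ℝ) ^ 2) := by positivity
  linarith
end

section
/- Let I ⊆ [0,1] be an interval and let p be a prime with 3/|I| < M < p < 2M. Then at least p·|I|/3 of the open intervals composing G_p(b) are completely contained in I, where b > 2. -/
/-!
With `r = 1/p^b`, every `k` with `k/p ∈ [u + 2r, v - 2r]` gives an interval `(k/p - r, k/p + r)`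
inside both `[u, v]` and `(r, 1 - r)`, and there are at least `p(v - u) - 4pr - 1` such `k`.
Since `p(v - u) > M(v - u) > 3` forces `p ≥ 4`, and `b > 2`, we get `4pr ≤ 4/p^(b-1) ≤ 1`,
so the count is at least `p(v - u) - 2 ≥ p(v - u)/3`.
-/

open Set

lemma sub_sub_one_le_card_Icc_ceil_floor (x y : ℝ) :
    y - x - 1 ≤ (Nat.card (Icc ⌈x⌉ ⌊y⌋) : ℝ) := by
  rw [Nat.card_eq_fintype_card, Fintype.card_Icc, Int.card_Icc]
  have hint : ((⌊y⌋ + 1 - ⌈x⌉ : ℤ) : ℝ) ≤ ((⌊y⌋ + 1 - ⌈x⌉).toNat : ℤ) :=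
    Int.cast_le.mpr (Int.self_le_toNat _)
  push_cast at hint
  linarith [Int.sub_one_lt_floor y, Int.ceil_lt_add_one x]

section Centers

variable {p r u v : ℝ}

lemma Ioo_sub_add_subset_Icc {c : ℝ} (hu : u + r ≤ c) (hv : c + r ≤ v) :
    Ioo (c - r) (c + r) ⊆ Icc u v :=
  Ioo_subset_Icc_self.trans (Icc_subset_Icc (by linarith) hv)

lemma Icc_ceil_floor_subset_centers (hp : 0 < p) (hr : 0 ≤ r) (hu : 0 ≤ u) (hv : v ≤ 1) :
    Icc ⌈p * (u + 2 * r)⌉ ⌊p * (v - 2 * r)⌋ ⊆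
      {k : ℤ | Ioo ((k : ℝ) / p - r) (k / p + r) ⊆ Icc u v ∧
        Ioo ((k : ℝ) / p - r) (k / p + r) ⊆ Ioo r (1 - r)} := by
  rintro k ⟨hlo, hhi⟩
  have hlo : u + 2 * r ≤ k / p := (le_div_iff₀' hp).2 (Int.ceil_le.1 hlo)
  have hhi : k / p ≤ v - 2 * r := (div_le_iff₀' hp).2 (Int.le_floor.1 hhi)
  exact ⟨Ioo_sub_add_subset_Icc (by linarith) (by linarith),
    Ioo_subset_Ioo (by linarith) (by linarith)⟩

lemma finite_setOf_Ioo_subset_Icc (hp : 0 < p) (hr : 0 < r) :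
    {k : ℤ | Ioo ((k : ℝ) / p - r) (k / p + r) ⊆ Icc u v}.Finite := by
  refine (finite_Icc ⌈p * u⌉ ⌊p * v⌋).subset fun k hk => ?_
  obtain ⟨hu, hv⟩ : (k : ℝ) / p ∈ Icc u v := hk ⟨by linarith, by linarith⟩
  exact ⟨Int.ceil_le.2 ((le_div_iff₀' hp).1 hu), Int.le_floor.2 ((div_le_iff₀' hp).1 hv)⟩

end Centers

lemma four_mul_mul_one_div_rpow_le_one {p b : ℝ} (hp : 4 ≤ p) (hb : 2 ≤ b) :
    4 * (p * (1 / p ^ b)) ≤ 1 := by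
  have hsq : p ^ (2 : ℝ) ≤ p ^ b := Real.rpow_le_rpow_of_exponent_le (by linarith) hb
  rw [Real.rpow_two] at hsq
  rw [mul_one_div, ← mul_div_assoc, div_le_one (by positivity)]
  nlinarith

theorem count_intervals_of_G_in_interval_general
    (b : ℝ) (hb : 2 < b) (u v : ℝ) (huv : u < v) (hI : Set.Icc u v ⊆ Set.Icc 0 1)
    (M p : ℕ) (hM : 3 / (v - u) < (M : ℝ)) (hMp : M < p) :
    (p : ℝ) * (v - u) / 3 ≤
      (Nat.card {k : ℤ |
        Set.Ioo ((k : ℝ) / p - 1 / (p : ℝ) ^ b) ((k : ℝ) / p + 1 / (p : ℝ) ^ b) ⊆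
          Set.Icc u v ∧
        Set.Ioo ((k : ℝ) / p - 1 / (p : ℝ) ^ b) ((k : ℝ) / p + 1 / (p : ℝ) ^ b) ⊆
          Set.Ioo (1 / (p : ℝ) ^ b) (1 - 1 / (p : ℝ) ^ b)} : ℝ) := by
  have hu : 0 ≤ u := (hI ⟨le_rfl, huv.le⟩).1
  have hv : v ≤ 1 := (hI ⟨huv.le, le_rfl⟩).2
  have hlen : 3 < (p : ℝ) * (v - u) := by
    have hMp' : (M : ℝ) < p := by exact_mod_cast hMp
    rw [div_lt_iff₀ (by linarith)] at hM
    nlinarith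
  have hp4 : (4 : ℝ) ≤ p := by
    have hp3 : 3 < p := by exact_mod_cast (by nlinarith : (3 : ℝ) < p)
    exact_mod_cast hp3
  have hp : (0 : ℝ) < p := by linarith
  have hr : 0 < 1 / (p : ℝ) ^ b := by positivity
  have hsmall := four_mul_mul_one_div_rpow_le_one hp4 hb.le
  have hcount := sub_sub_one_le_card_Icc_ceil_floor
    (p * (u + 2 * (1 / (p : ℝ) ^ b))) (p * (v - 2 * (1 / (p : ℝ) ^ b)))
  have hmono := Nat.card_mono ((finite_setOf_Ioo_subset_Icc hp hr).subset fun _ hk => hk.1)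
    (Icc_ceil_floor_subset_centers hp hr.le hu hv)
  rify at hmono
  linarith

/-- Let `I = [u, v] ⊆ [0, 1]` be an interval, `b > 2`, and `p` a prime with
`3/|I| < M < p < 2M`.  Then at least `p·|I|/3` of the open intervals
`(k/p − 1/p^b, k/p + 1/p^b)` composing `G_p(b)` are completely contained in `I`, where
`G_q(b) = { x ∈ (1/q^b, 1 − 1/q^b) : ∃ p ∈ ℤ, |p/q − x| < 1/q^b }`. -/
theorem count_intervals_of_G_in_interval
    (b : ℝ) (hb : 2 < b) (u v : ℝ) (huv : u < v) (hI : Set.Icc u v ⊆ Set.Icc 0 1)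
    (M p : ℕ) (hp : p.Prime) (hM : 3 / (v - u) < (M : ℝ)) (hMp : M < p) (hp2M : p < 2 * M) :
    (p : ℝ) * (v - u) / 3 ≤
      (Nat.card {k : ℤ |
        Set.Ioo ((k : ℝ) / p - 1 / (p : ℝ) ^ b) ((k : ℝ) / p + 1 / (p : ℝ) ^ b) ⊆
          Set.Icc u v ∧
        Set.Ioo ((k : ℝ) / p - 1 / (p : ℝ) ^ b) ((k : ℝ) / p + 1 / (p : ℝ) ^ b) ⊆
          Set.Ioo (1 / (p : ℝ) ^ b) (1 - 1 / (p : ℝ) ^ b)} : ℝ) :=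
  count_intervals_of_G_in_interval_general b hb u v huv hI M p hM hMp
end
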